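/- arXiv:1403.6307 — 2 statements merged into one kernel-verified Lean document; each statement's English description precedes it below -/
import Mathlib

section
/- Let d be a finite sequence of positive integers of length n with maximum element a and minimum element b. If a ≡ b (mod 2) and nb ≥ (a+b)²/4, or a ≢ b (mod 2) and nb ≥ ⌊(a+b)²/4⌋, then d is bipartite graphic. -/
/-!
By the Gale–Ryser theorem it suffices that every set `A` of `k` rows satisfies
`∑_{i ∈ A} d i ≤ ∑_j min (d j) k`. Splitting the right side over `A` and its complement, this
follows from `k (a - k) ≤ (n - k) min b k`, which for `b < k < a` reads `k (a + b) ≤ n b + k²`;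
and `max_k (k (a + b) - k²) = ⌊(a + b)² / 4⌋`.

Gale–Ryser sufficiency is Ryser's greedy induction: join the first row to the `r 0` columns of
largest demand; the condition then still holds for the remaining rows and reduced demands.
-/

/-- A finite sequence `d` of length `n` is *bipartite graphic* if there is a simple
bipartite graph (given by its biadjacency matrix) whose two parts each have `d` as
their list of vertex degrees (the second part's degrees being a permutation of `d`). -/
def BipartiteGraphic {n : ℕ} (d : Fin n → ℕ) : Prop :=
  ∃ M : Fin n → Fin n → Bool, ∃ e : Equiv.Perm (Fin n),
    (∀ i, (∑ j, if M i j then 1 else 0) = d i) ∧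
    (∀ j, (∑ i, if M i j then 1 else 0) = d (e j))

open Finset

section GaleRyser

variable {α β : Type*}

/-- The subset form of the Gale–Ryser condition; for antitone `r` it is equivalent to the usual
prefix-sum form, but it needs no sorting and survives deleting any row. -/
def GaleRyserCondition [Fintype β] (r : α → ℕ) (c : β → ℕ) : Prop :=
  ∀ A : Finset α, ∑ i ∈ A, r i ≤ ∑ j, min (c j) #A

theorem exists_card_eq_forall_notMem_le [Fintype β] [DecidableEq β] {γ : Type*} [LinearOrder γ]
    (f : β → γ) {t : ℕ} (ht : t ≤ Fintype.card β) :
    ∃ D : Finset β, #D = t ∧ ∀ j ∈ D, ∀ j' ∉ D, f j' ≤ f j := by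
  induction t with
  | zero => exact ⟨∅, rfl, by simp⟩
  | succ t ih =>
    obtain ⟨D, hcard, hD⟩ := ih (by omega)
    have hne : Dᶜ.Nonempty := by rw [← card_pos, card_compl]; omega
    obtain ⟨j, hj, hmax⟩ := exists_max_image Dᶜ f hne
    rw [mem_compl] at hj
    refine ⟨insert j D, by rw [card_insert_of_notMem hj, hcard], fun x hx y hy => ?_⟩
    rw [mem_insert, not_or] at hy
    rcases mem_insert.mp hx with rfl | hx
    · exact hmax y (mem_compl.mpr hy.2)
    · exact hD x hx y hy.2

theorem sum_min_succ [Fintype β] (c : β → ℕ) (k : ℕ) :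
    ∑ j, min (c j) (k + 1) = ∑ j, min (c j) k + #{j | k < c j} := by
  rw [card_eq_sum_ones, sum_filter, ← sum_add_distrib]
  refine sum_congr rfl fun j _ => ?_
  split_ifs <;> omega

theorem card_lt_add_card_le_card_of_forall_notMem_le [Fintype β] [DecidableEq β] {c : β → ℕ}
    {D : Finset β} (hD : ∀ j ∈ D, ∀ j' ∉ D, c j' ≤ c j) {j₀ : β} (hj₀ : j₀ ∈ D) {s : ℕ}
    (hs : c j₀ ≤ s) : #{j | s < c j} + #{j | j ∈ D ∧ c j ≤ s} ≤ #D := by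
  rw [← card_union_of_disjoint (disjoint_filter.2 fun j _ h1 h2 => by omega)]
  refine card_le_card fun j hj => ?_
  simp only [mem_union, mem_filter, mem_univ, true_and] at hj
  rcases hj with hj | ⟨hj, -⟩
  · by_contra hjD
    have := hD j₀ hj₀ j hjD
    omega
  · exact hj

theorem sub_indicator_add_indicator [DecidableEq β] {c : β → ℕ} {D : Finset β}
    (hpos : ∀ j ∈ D, 0 < c j) (j : β) :
    (c j - if j ∈ D then 1 else 0) + (if j ∈ D then 1 else 0) = c j :=
  Nat.sub_add_cancel (by split_ifs with hj; exacts [hpos j hj, Nat.zero_le _])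

theorem sum_min_sub_indicator_add_card [Fintype β] [DecidableEq β] {c : β → ℕ} {D : Finset β}
    (hpos : ∀ j ∈ D, 0 < c j) (k : ℕ) :
    ∑ j, min (c j - if j ∈ D then 1 else 0) k + #{j | j ∈ D ∧ c j ≤ k} = ∑ j, min (c j) k := by
  rw [card_eq_sum_ones, sum_filter, ← sum_add_distrib]
  refine sum_congr rfl fun j _ => ?_
  by_cases hj : j ∈ D
  · have := hpos j hj
    simp only [hj, if_true, true_and]
    split_ifs <;> omega
  · simp [hj]

theorem galeRyserCondition_tail [Fintype β] [DecidableEq β] {m : ℕ} {r : Fin (m + 1) → ℕ}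
    {c : β → ℕ} (hGR : GaleRyserCondition r c) {D : Finset β} (hcard : #D = r 0)
    (hD : ∀ j ∈ D, ∀ j' ∉ D, c j' ≤ c j) (hpos : ∀ j ∈ D, 0 < c j) :
    GaleRyserCondition (fun i : Fin m => r i.succ) (fun j => c j - if j ∈ D then 1 else 0) := by
  intro A
  dsimp only
  have hsplit := sum_min_sub_indicator_add_card hpos #A
  have hA := hGR (A.map (Fin.succEmb m))
  have hA' := hGR (cons 0 (A.map (Fin.succEmb m)) (by simp))
  simp only [sum_map, card_map, sum_cons, card_cons, sum_min_succ, Fin.coe_succEmb] at hA hA'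
  -- Either no column of `D` is capped at `#A`, so the truncated sum is unchanged, or one is, and
  -- then every column of demand `> #A` lies in `D`: use the condition on `A` plus row `0`.
  rcases (#{j | j ∈ D ∧ c j ≤ #A}).eq_zero_or_pos with hu | hu
  · omega
  · obtain ⟨j₀, hj₀⟩ := card_pos.1 hu
    simp only [mem_filter, mem_univ, true_and] at hj₀
    have := card_lt_add_card_le_card_of_forall_notMem_le hD hj₀.1 hj₀.2
    omega

theorem sum_tail_eq_sum_sub_indicator [Fintype β] [DecidableEq β] {m : ℕ} {r : Fin (m + 1) → ℕ}
    {c : β → ℕ} (hsum : ∑ i, r i = ∑ j, c j) {D : Finset β} (hcard : #D = r 0)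
    (hpos : ∀ j ∈ D, 0 < c j) :
    ∑ i : Fin m, r i.succ = ∑ j, (c j - if j ∈ D then 1 else 0) := by
  have hc : ∑ j, c j = ∑ j, (c j - if j ∈ D then 1 else 0) + #D := by
    have hD : #D = ∑ j, if j ∈ D then 1 else 0 := by simp
    rw [hD, ← sum_add_distrib]
    exact sum_congr rfl fun j _ => (sub_indicator_add_indicator hpos j).symm
  rw [Fin.sum_univ_succ] at hsum
  omega

theorem exists_bool_matrix_of_galeRyserCondition [Fintype β] [DecidableEq β] {m : ℕ}
    (r : Fin m → ℕ) (c : β → ℕ) (hsum : ∑ i, r i = ∑ j, c j) (hGR : GaleRyserCondition r c) :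
    ∃ M : Fin m → β → Bool, (∀ i, (∑ j, if M i j then 1 else 0) = r i) ∧
      (∀ j, (∑ i, if M i j then 1 else 0) = c j) := by
  induction m generalizing c with
  | zero =>
    refine ⟨fun i => i.elim0, fun i => i.elim0, fun j => ?_⟩
    simp only [univ_eq_empty, sum_empty] at hsum ⊢
    exact (sum_eq_zero_iff.1 hsum.symm j (mem_univ j)).symm
  | succ m ih =>
    have ht : r 0 ≤ #{j | 0 < c j} := by
      simpa [sum_min_succ] using hGR {0}
    obtain ⟨D, hcard, hD⟩ := exists_card_eq_forall_notMem_le c (ht.trans (card_le_univ _))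
    have hpos : ∀ j ∈ D, 0 < c j := by
      intro j hj
      by_contra! hj0
      have := card_lt_add_card_le_card_of_forall_notMem_le hD hj hj0
      have : 0 < #{j | j ∈ D ∧ c j ≤ 0} := card_pos.2 ⟨j, by simpa [hj] using hj0⟩
      omega
    obtain ⟨M, hrow, hcol⟩ := ih (fun i => r i.succ) _
      (sum_tail_eq_sum_sub_indicator hsum hcard hpos) (galeRyserCondition_tail hGR hcard hD hpos)
    refine ⟨Fin.cons (fun j => decide (j ∈ D)) M, fun i => ?_, fun j => ?_⟩
    · cases i using Fin.cases with
      | zero => simpa [sum_boole] using hcard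
      | succ i => simpa using hrow i
    · rw [Fin.sum_univ_succ]
      simp only [Fin.cons_zero, Fin.cons_succ, hcol, decide_eq_true_eq]
      rw [add_comm, sub_indicator_add_indicator hpos]

end GaleRyser

theorem mul_le_sq_div_four_add_mul_self (s k : ℕ) : k * s ≤ s ^ 2 / 4 + k * k := by
  rcases le_total (k * s) (k * k) with h | h
  · omega
  obtain ⟨e, he⟩ := Nat.exists_eq_add_of_le h
  have : 4 * e ≤ s ^ 2 := by
    zify at he ⊢
    nlinarith [sq_nonneg ((s : ℤ) - 2 * k)]
  have := (Nat.le_div_iff_mul_le (by norm_num : 0 < 4)).2 (by omega : e * 4 ≤ s ^ 2)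
  omega

theorem mul_sub_le_sub_mul_min {n a b k : ℕ} (hk : k ≤ n) (han : a ≤ n)
    (hkey : k * (a + b) ≤ n * b + k * k) : k * (a - k) ≤ (n - k) * min b k := by
  rcases le_total a k with hak | hka
  · simp [Nat.sub_eq_zero_of_le hak]
  rcases le_total k b with hkb | hbk
  · rw [min_eq_right hkb, mul_comm]
    exact Nat.mul_le_mul_right k (by omega)
  · rw [min_eq_left hbk]
    zify [hka, hk] at hkey ⊢
    nlinarith

theorem galeRyserCondition_self_of_le_of_le {α : Type*} [Fintype α] {d : α → ℕ} {a b : ℕ}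
    (hb : ∀ i, b ≤ d i) (ha : ∀ i, d i ≤ a) (han : a ≤ Fintype.card α)
    (hkey : ∀ k, k * (a + b) ≤ Fintype.card α * b + k * k) : GaleRyserCondition d d := by
  classical
  intro A
  have hk : #A ≤ Fintype.card α := card_le_univ A
  have hupper : ∑ i ∈ A, d i ≤ ∑ i ∈ A, min (d i) #A + #A * (a - #A) :=
    calc ∑ i ∈ A, d i ≤ ∑ i ∈ A, (min (d i) #A + (a - #A)) :=
          sum_le_sum fun i _ => by have := ha i; omega
      _ = _ := by rw [sum_add_distrib, sum_const, smul_eq_mul]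
  have hlower : (Fintype.card α - #A) * min b #A ≤ ∑ i ∈ Aᶜ, min (d i) #A :=
    calc (Fintype.card α - #A) * min b #A = ∑ i ∈ Aᶜ, min b #A := by
          rw [sum_const, card_compl, smul_eq_mul]
      _ ≤ _ := sum_le_sum fun i _ => min_le_min_right _ (hb i)
  have := sum_add_sum_compl A fun i => min (d i) #A
  have := mul_sub_le_sub_mul_min hk han (hkey #A)
  omega

theorem stmt_1_general (n a b : ℕ) (d : Fin n → ℕ)
    (hpos : ∀ i, 0 < d i)
    (hmax : (∀ i, d i ≤ a) ∧ ∃ i, d i = a)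
    (hmin : (∀ i, b ≤ d i) ∧ ∃ i, d i = b)
    (h : (a % 2 = b % 2 ∧ 4 * n * b ≥ (a + b) ^ 2) ∨
         (a % 2 ≠ b % 2 ∧ n * b ≥ (a + b) ^ 2 / 4)) :
    BipartiteGraphic d := by
  obtain ⟨i, hi⟩ := hmin.2
  have hb : 0 < b := hi ▸ hpos i
  have hnb : (a + b) ^ 2 / 4 ≤ n * b := by
    rcases h with ⟨-, h⟩ | ⟨-, h⟩
    · exact Nat.div_le_of_le_mul (by rw [← mul_assoc]; exact h)
    · exact h
  have hkey (k : ℕ) : k * (a + b) ≤ n * b + k * k :=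
    (mul_le_sq_div_four_add_mul_self _ k).trans (by omega)
  have han : a ≤ n := by
    have := hkey a
    rw [mul_add] at this
    exact le_of_mul_le_mul_right (by omega) hb
  obtain ⟨M, hrow, hcol⟩ := exists_bool_matrix_of_galeRyserCondition d d rfl
    (galeRyserCondition_self_of_le_of_le hmin.1 hmax.1 (by simpa using han)
      (by simpa using hkey))
  exact ⟨M, Equiv.refl _, hrow, hcol⟩

theorem stmt_1 (n a b : ℕ) (hn : 0 < n) (d : Fin n → ℕ)
    (hpos : ∀ i, 0 < d i)
    (hmax : (∀ i, d i ≤ a) ∧ ∃ i, d i = a)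
    (hmin : (∀ i, b ≤ d i) ∧ ∃ i, d i = b)
    (h : (a % 2 = b % 2 ∧ 4 * n * b ≥ (a + b) ^ 2) ∨
         (a % 2 ≠ b % 2 ∧ n * b ≥ (a + b) ^ 2 / 4)) :
    BipartiteGraphic d :=
  stmt_1_general n a b d hpos hmax hmin h
end

section
/- If a ≢ b (mod 2), b < a ≤ n, and 4nb < (a+b)² − 1, then the sequence consisting of (a+b+1)/2 copies of a and n − (a+b+1)/2 copies of b is not bipartite graphic. -/
/-!
Gale–Ryser necessity: if `k` rows of a biadjacency matrix are chosen, every column meets them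
in at most `min k (column degree)` entries, so the chosen row degrees sum to at most
`∑ⱼ min k dⱼ`. For the step sequence with `k = (a + b + 1) / 2` copies of `a` this reads
`k a ≤ k² + (n - k) b`; as `a + b = 2k - 1`, it amounts to `k² - k ≤ n b`, which is exactly the
negation of `4 n b < (a + b)² - 1 = 4k² - 4k`.
-/

open Finset

theorem BipartiteGraphic.sum_le_sum_min {n : ℕ} {d : Fin n → ℕ} (hd : BipartiteGraphic d)
    (S : Finset (Fin n)) : ∑ i ∈ S, d i ≤ ∑ j, min #S (d j) := by
  obtain ⟨M, e, hrow, hcol⟩ := hd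
  calc ∑ i ∈ S, d i
      = ∑ j, ∑ i ∈ S, (if M i j then 1 else 0) := by
        simp only [← hrow]; exact sum_comm
    _ ≤ ∑ j, min #S (d (e j)) := by
        refine sum_le_sum fun j _ => le_min ?_ ?_
        · exact (sum_le_sum fun i _ => by split <;> simp).trans_eq (card_eq_sum_ones S).symm
        · exact (hcol j).symm ▸ sum_le_sum_of_subset (subset_univ S)
    _ = ∑ j, min #S (d j) := Equiv.sum_comp e fun j => min #S (d j)

section StepSequence

variable {n k : ℕ} (a b : ℕ)

theorem sum_filter_val_lt_ite :
    ∑ i ∈ ({i : Fin n | (i : ℕ) < k} : Finset _), (if (i : ℕ) < k then a else b)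
      = min n k * a := by
  rw [sum_ite_of_true fun i hi => (mem_filter.mp hi).2, sum_const, Fin.card_filter_val_lt,
    smul_eq_mul]

theorem sum_min_ite_val_lt_le (hkn : k ≤ n) :
    ∑ j : Fin n, min k (if (j : ℕ) < k then a else b) ≤ k * k + (n - k) * b := by
  rw [Fin.sum_univ_eq_sum_range (fun j => min k (if j < k then a else b)),
    ← Nat.add_sub_cancel' hkn, sum_range_add, Nat.add_sub_cancel_left]
  gcongr
  · exact (sum_le_sum fun j _ => min_le_left _ _).trans_eq (by simp)
  · exact (sum_le_sum (g := fun _ => b) fun j _ => by simp).trans_eq (by simp)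

end StepSequence

theorem stmt_5_general (a b n : ℕ) (hba : b < a) (han : a ≤ n)
    (hpar : a % 2 ≠ b % 2) (h : 4 * n * b < (a + b) ^ 2 - 1) :
    ¬ BipartiteGraphic (fun i : Fin n => if (i : ℕ) < (a + b + 1) / 2 then a else b) := by
  intro hd
  set k := (a + b + 1) / 2
  have hk : a + b + 1 = 2 * k := by omega
  have hkn : k ≤ n := by omega
  have hcount : k * a ≤ k * k + (n - k) * b := by
    have := hd.sum_le_sum_min {i : Fin n | (i : ℕ) < k}
    rw [sum_filter_val_lt_ite, Fin.card_filter_val_lt, min_eq_right hkn] at this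
    exact this.trans (sum_min_ite_val_lt_le a b hkn)
  have hnb : (n - k) * b + k * b = n * b := by rw [← add_mul, Nat.sub_add_cancel hkn]
  have h' : 4 * n * b + 1 < (a + b) ^ 2 := by omega
  nlinarith [hk, hcount, hnb, h']

theorem stmt_5 (a b n : ℕ) (hb : 0 < b) (hba : b < a) (han : a ≤ n)
    (hpar : a % 2 ≠ b % 2) (h : 4 * n * b < (a + b) ^ 2 - 1) :
    ¬ BipartiteGraphic (fun i : Fin n => if (i : ℕ) < (a + b + 1) / 2 then a else b) :=
  stmt_5_general a b n hba han hpar h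
end
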